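/- arXiv:math/0302118 — 5 statements merged into one kernel-verified Lean document; each statement's English description precedes it below -/
import Mathlib

section
/- Let A be a unital C*-algebra and α an automorphism of A. Suppose there exist x ∈ A and K ≥ 1 such that for each n ∈ ℕ the linear map Γ_n : ℓ^n_1 → span{x, α(x), …, α^{n−1}(x)} sending the i-th standard basis vector to α^{i−1}(x) is an isomorphism whose inverse has norm at most K. Then the induced homeomorphism S_α of the closed unit ball B_1(A*) (with the weak* topology) has topological entropy at least log 2. -/
/-!
Since `x, α x, …, α^{n-1} x` span a copy of `ℓ¹ₙ`, Hahn–Banach gives for every sign pattern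
`ε ∈ {±1}ⁿ` a functional `σ_ε` of norm at most `1` with `σ_ε(α^k x) = ε_k / K`, i.e.
`Re (S_α^k σ_ε)(x) = ε_k / K`. The two open half-spaces `Re σ(x) > -1/K` and `Re σ(x) < 1/K`
cover the dual ball, and a set `U_0 ∩ S_α⁻¹ U_1 ∩ ⋯` of their `n`-fold refinement can contain
only one `σ_ε`, since each `U_k` fixes the sign `ε_k`. So `N ≥ 2ⁿ`.
-/

/-- Minimal number of "itinerary sets" `⋂_{k<n} T^{-k} U_k`, with each `U_k ∈ 𝒰`,
needed to cover `S`; i.e. `N(𝒰 ∨ T⁻¹𝒰 ∨ ⋯ ∨ T^{-(n-1)}𝒰)` relative to `S`. -/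
noncomputable def coverN {X : Type*} (S : Set X) (T : X → X) (𝒰 : Set (Set X)) (n : ℕ) : ℕ :=
  sInf {m : ℕ | ∃ c : Fin m → Fin n → Set X,
    (∀ j k, c j k ∈ 𝒰) ∧ S ⊆ ⋃ j, ⋂ k : Fin n, T^[(k : ℕ)] ⁻¹' c j k}

/-- Topological entropy of `T` on `S` via finite open covers, with values in `EReal`. -/
noncomputable def coverEntropyOpen {X : Type*} [TopologicalSpace X]
    (S : Set X) (T : X → X) : EReal :=
  ⨆ 𝒰 : {U : Set (Set X) // U.Finite ∧ (∀ V ∈ U, IsOpen V) ∧ S ⊆ ⋃₀ U},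
    Filter.limsup (fun n : ℕ => ((Real.log (coverN S T 𝒰 n) / n : ℝ) : EReal)) Filter.atTop

open Filter

section Functional

variable {𝕜 E ι : Type*} [RCLike 𝕜] [NormedAddCommGroup E] [NormedSpace 𝕜 E] [Fintype ι]
  {v : ι → E} {K : ℝ}

theorem linearIndependent_of_sum_norm_le
    (hv : ∀ c : ι → 𝕜, ∑ i, ‖c i‖ ≤ K * ‖∑ i, c i • v i‖) : LinearIndependent 𝕜 v := by
  rw [Fintype.linearIndependent_iff]
  intro c hc i
  have hsum : ∑ j, ‖c j‖ = 0 :=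
    le_antisymm (by simpa [hc] using hv c) (Finset.sum_nonneg fun j _ => norm_nonneg _)
  exact norm_eq_zero.mp <|
    (Finset.sum_eq_zero_iff_of_nonneg fun j _ => norm_nonneg (c j)).mp hsum i (Finset.mem_univ i)

theorem exists_norm_le_one_apply_eq_of_sum_norm_le (hK : 0 < K)
    (hv : ∀ c : ι → 𝕜, ∑ i, ‖c i‖ ≤ K * ‖∑ i, c i • v i‖) (t : ι → 𝕜) (ht : ∀ i, ‖t i‖ ≤ K⁻¹) :
    ∃ g : StrongDual 𝕜 E, ‖g‖ ≤ 1 ∧ ∀ i, g (v i) = t i := by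
  have hli := linearIndependent_of_sum_norm_le hv
  let b := Module.Basis.span hli
  let f : Submodule.span 𝕜 (Set.range v) →ₗ[𝕜] 𝕜 := b.constr 𝕜 t
  have hb : ∀ i, (b i : E) = v i := fun i => by simp [b, Module.Basis.span_apply]
  have hf : ∀ y, ‖f y‖ ≤ 1 * ‖y‖ := fun y => by
    have hy : (y : E) = ∑ i, b.equivFun y i • v i := by
      conv_lhs => rw [← b.sum_equivFun y]
      simp only [Submodule.coe_sum, Submodule.coe_smul, hb]
    calc ‖f y‖ = ‖∑ i, b.equivFun y i • t i‖ := by rw [b.constr_apply_fintype 𝕜]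
      _ ≤ ∑ i, ‖b.equivFun y i‖ * K⁻¹ := by
          refine (norm_sum_le _ _).trans (Finset.sum_le_sum fun i _ => ?_)
          rw [norm_smul]
          gcongr
          exact ht i
      _ = K⁻¹ * ∑ i, ‖b.equivFun y i‖ := by rw [← Finset.sum_mul, mul_comm]
      _ ≤ K⁻¹ * (K * ‖y‖) := by
          gcongr
          exact (hv _).trans_eq (by rw [← hy]; rfl)
      _ = 1 * ‖y‖ := by field_simp
  obtain ⟨g, hg, hg_norm⟩ := exists_extension_norm_eq _ (f.mkContinuous 1 hf)
  refine ⟨g, hg_norm ▸ LinearMap.mkContinuous_norm_le _ zero_le_one hf, fun i => ?_⟩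
  rw [← hb, hg, LinearMap.mkContinuous_apply, b.constr_basis]

end Functional

theorem iterate_apply_eq_apply_iterate {F A B : Type*} [FunLike F A B] {T : F → F} {f : A → A}
    (hT : ∀ σ a, T σ a = σ (f a)) (k : ℕ) (σ : F) (a : A) : T^[k] σ a = σ (f^[k] a) := by
  induction k generalizing σ with
  | zero => rfl
  | succ k ih => rw [Function.iterate_succ_apply, ih, hT, ← Function.iterate_succ_apply' f]

section CoverN

variable {X : Type*} {S : Set X} {T : X → X} {𝒰 : Set (Set X)} {n : ℕ}

theorem exists_itinerary_cover (h𝒰 : 𝒰.Finite) (hcov : ⋃₀ 𝒰 = Set.univ) :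
    ∃ (m : ℕ) (c : Fin m → Fin n → Set X),
      (∀ j k, c j k ∈ 𝒰) ∧ S ⊆ ⋃ j, ⋂ k : Fin n, T^[(k : ℕ)] ⁻¹' c j k := by
  have := h𝒰.to_subtype
  let e := Finite.equivFin (Fin n → 𝒰)
  refine ⟨_, fun j k => e.symm j k, fun j k => (e.symm j k).2, fun p _ => ?_⟩
  have hmem : ∀ k : Fin n, ∃ U : 𝒰, T^[(k : ℕ)] p ∈ (U : Set X) := fun k => by
    obtain ⟨U, hU, hpU⟩ := Set.mem_sUnion.mp (hcov.symm ▸ Set.mem_univ (T^[(k : ℕ)] p))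
    exact ⟨⟨U, hU⟩, hpU⟩
  choose U hU using hmem
  exact Set.mem_iUnion.mpr ⟨e U, Set.mem_iInter.mpr fun k => by simpa using hU k⟩

theorem card_le_coverN {ι : Type*} [Fintype ι] (h𝒰 : 𝒰.Finite) (hcov : ⋃₀ 𝒰 = Set.univ)
    (p : ι → X) (hpS : ∀ i, p i ∈ S)
    (hsep : ∀ i j, (∀ k : Fin n, ∃ U ∈ 𝒰, T^[(k : ℕ)] (p i) ∈ U ∧ T^[(k : ℕ)] (p j) ∈ U) →
      i = j) :
    Fintype.card ι ≤ coverN S T 𝒰 n := by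
  obtain ⟨m₀, c₀, hc₀⟩ := exists_itinerary_cover (S := S) (T := T) (n := n) h𝒰 hcov
  -- `coverN` is an `sInf` in `ℕ`, which would be `0` if no itinerary cover existed.
  refine le_csInf ⟨m₀, c₀, hc₀⟩ ?_
  rintro m ⟨c, hc𝒰, hcS⟩
  choose J hJ using fun i => Set.mem_iUnion.mp (hcS (hpS i))
  have hJ_inj : Function.Injective J := fun i j hij =>
    hsep i j fun k => ⟨c (J i) k, hc𝒰 _ k, Set.mem_iInter.mp (hJ i) k,
      hij ▸ Set.mem_iInter.mp (hJ j) k⟩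
  simpa using Fintype.card_le_of_injective J hJ_inj

theorem sUnion_halfSpaces_eq_univ (φ : X → ℝ) {r : ℝ} (hr : 0 < r) :
    ⋃₀ {{q | -r < φ q}, {q | φ q < r}} = Set.univ := by
  ext q
  simp only [Set.sUnion_insert, Set.sUnion_singleton, Set.mem_union, Set.mem_ofPred_eq,
    Set.mem_univ, iff_true]
  by_contra! h
  linarith [h.1, h.2]

theorem two_pow_le_coverN_of_sign_orbits {φ : X → ℝ} {r : ℝ} (hr : 0 < r)
    (p : (Fin n → Bool) → X) (hpS : ∀ ε, p ε ∈ S)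
    (hp : ∀ ε (k : Fin n), φ (T^[(k : ℕ)] (p ε)) = if ε k then r else -r) :
    2 ^ n ≤ coverN S T {{q | -r < φ q}, {q | φ q < r}} n := by
  have hpos : ∀ ε (k : Fin n), -r < φ (T^[(k : ℕ)] (p ε)) ↔ ε k = true := fun ε k => by
    rw [hp]; cases ε k <;> simp [hr]
  have hneg : ∀ ε (k : Fin n), φ (T^[(k : ℕ)] (p ε)) < r ↔ ε k = false := fun ε k => by
    rw [hp]; cases ε k <;> simp [hr]
  simpa using card_le_coverN (Set.toFinite _) (sUnion_halfSpaces_eq_univ φ hr) p hpS fun ε ε' h => funext fun k => by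
    obtain ⟨U, hU, h₁, h₂⟩ := h k
    rcases hU with rfl | rfl
    · exact ((hpos ε k).1 h₁).trans ((hpos ε' k).1 h₂).symm
    · exact ((hneg ε k).1 h₁).trans ((hneg ε' k).1 h₂).symm

end CoverN

theorem log_le_coverEntropyOpen {X : Type*} [TopologicalSpace X] {S : Set X} {T : X → X}
    {𝒰 : Set (Set X)} (h𝒰 : 𝒰.Finite ∧ (∀ V ∈ 𝒰, IsOpen V) ∧ S ⊆ ⋃₀ 𝒰) {b : ℝ} (hb : 0 < b)
    (hN : ∀ n, b ^ n ≤ coverN S T 𝒰 n) :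
    (Real.log b : EReal) ≤ coverEntropyOpen S T := by
  refine le_trans ?_ (le_iSup_of_le ⟨𝒰, h𝒰⟩ le_rfl)
  refine le_limsup_of_frequently_le (Eventually.frequently ?_)
  filter_upwards [eventually_ge_atTop 1] with n hn
  have hn₀ : (0 : ℝ) < n := by exact_mod_cast hn
  have hlog : n * Real.log b ≤ Real.log (coverN S T 𝒰 n) := by
    rw [← Real.log_pow]
    exact Real.log_le_log (by positivity) (hN n)
  exact EReal.coe_le_coe_iff.mpr ((le_div_iff₀ hn₀).mpr (by linarith))

/-- if some `x ∈ A` has orbit `x, α(x), α²(x), …` spanning copies of `ℓ¹ₙ`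
with inverse-norm bound `K`, then the induced homeomorphism of the closed unit ball of
the dual with the weak* topology has topological entropy at least `log 2`. -/
theorem log_two_le_coverEntropyOpen_dualBall
    (A : Type*) [CStarAlgebra A]
    (α : A ≃⋆ₐ[ℂ] A) (x : A) (K : ℝ) (hK : 1 ≤ K)
    (hℓ1 : ∀ (n : ℕ) (c : Fin n → ℂ),
      ∑ i : Fin n, ‖c i‖ ≤ K * ‖∑ i : Fin n, c i • (⇑α)^[(i : ℕ)] x‖)
    (T : WeakDual ℂ A → WeakDual ℂ A)
    (hT : ∀ (σ : WeakDual ℂ A) (a : A), T σ a = σ (α a)) :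
    (Real.log 2 : EReal) ≤
      coverEntropyOpen {σ : WeakDual ℂ A | ∀ a : A, ‖σ a‖ ≤ ‖a‖} T := by
  have hK₀ : 0 < K := zero_lt_one.trans_le hK
  let φ : WeakDual ℂ A → ℝ := fun σ => (σ x).re
  have hφ : Continuous φ := Complex.continuous_re.comp (WeakDual.eval_continuous x)
  refine log_le_coverEntropyOpen (𝒰 := {{σ | -K⁻¹ < φ σ}, {σ | φ σ < K⁻¹}})
    ⟨Set.toFinite _, ?_, ?_⟩ two_pos fun n => ?_
  · rintro V (rfl | rfl)
    exacts [isOpen_lt continuous_const hφ, isOpen_lt hφ continuous_const]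
  · exact (sUnion_halfSpaces_eq_univ φ (inv_pos.mpr hK₀)).symm ▸ Set.subset_univ _
  choose σ hσ_norm hσ using fun ε : Fin n → Bool =>
    exists_norm_le_one_apply_eq_of_sum_norm_le hK₀ (hℓ1 n)
      (fun k => ((if ε k then K⁻¹ else -K⁻¹ : ℝ) : ℂ)) fun k => by split_ifs <;> simp [abs_of_pos hK₀]
  let τ : (Fin n → Bool) → WeakDual ℂ A := fun ε => StrongDual.toWeakDual (σ ε)
  have hball : ∀ ε, τ ε ∈ {σ : WeakDual ℂ A | ∀ a : A, ‖σ a‖ ≤ ‖a‖} := fun ε a => by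
    simpa [τ, StrongDual.toWeakDual_apply] using (σ ε).le_of_opNorm_le (hσ_norm ε) a
  have hsign : ∀ ε (k : Fin n), φ (T^[(k : ℕ)] (τ ε)) = if ε k then K⁻¹ else -K⁻¹ :=
    fun ε k => by
      simp only [φ, τ, iterate_apply_eq_apply_iterate hT, StrongDual.toWeakDual_apply, hσ]
      split_ifs <;> simp
  exact_mod_cast two_pow_le_coverN_of_sign_orbits (inv_pos.mpr hK₀) τ hball hsign
end

section
/- For 2 ≤ p < ∞, the Banach–Mazur distance between the k×k matrix spaces C^k_∞ (operator norm) and C^k_p (Schatten p-norm) equals k^{1/p}. -/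
open scoped ComplexOrder

/-- The singular values of a complex `k × k` matrix: square roots of eigenvalues of `xᴴx`. -/
noncomputable def singVals {k : ℕ} (x : Matrix (Fin k) (Fin k) ℂ) : Fin k → ℝ :=
  fun i => Real.sqrt ((Matrix.posSemidef_conjTranspose_mul_self x).1.eigenvalues i)

/-- The Schatten `p`-norm `‖x‖_p = (Tr |x|^p)^{1/p}` of a `k × k` complex matrix. -/
noncomputable def schattenNorm {k : ℕ} (p : ℝ) (x : Matrix (Fin k) (Fin k) ℂ) : ℝ :=
  (∑ i : Fin k, singVals x i ^ p) ^ (1 / p)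
/-- The operator norm of a linear map between two spaces carrying given norm functions. -/
noncomputable def opNormBetween {V W : Type*} [AddCommGroup V] [Module ℂ V]
    [AddCommGroup W] [Module ℂ W] (N₁ : V → ℝ) (N₂ : W → ℝ) (f : V →ₗ[ℂ] W) : ℝ :=
  sInf {c : ℝ | 0 ≤ c ∧ ∀ v, N₂ (f v) ≤ c * N₁ v}

/-- The Banach–Mazur distance between two norms on the same space. -/
noncomputable def BMdist {V : Type*} [AddCommGroup V] [Module ℂ V] (N₁ N₂ : V → ℝ) : ℝ :=
  sInf {t : ℝ | ∃ Γ : V ≃ₗ[ℂ] V,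
    t = opNormBetween N₁ N₂ Γ.toLinearMap * opNormBetween N₂ N₁ Γ.symm.toLinearMap}

/-- The `C*`-operator norm of a `k × k` complex matrix (acting on `ℓ²ₖ`). -/
noncomputable def matrixOpNorm {k : ℕ} (x : Matrix (Fin k) (Fin k) ℂ) : ℝ :=
  ‖Matrix.toEuclideanCLM (𝕜 := ℂ) x‖

/-! The identity map gives the upper bound: the singular values of `x` lie in `[0, ‖x‖_∞]` and the
largest one equals `‖x‖_∞`, so `‖x‖_∞ ≤ ‖x‖_p ≤ k^{1/p} ‖x‖_∞`.

For the lower bound let `Γ` be an isomorphism and `y_i = Γ e_ii` the images of the diagonal matrix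
units. Since `‖·‖_p ≤ ‖·‖_2` for `p ≥ 2`, each `y_i` has Hilbert–Schmidt norm at least
`‖Γ⁻¹‖⁻¹`. For every choice of signs `ε`, `∑ ε_i y_i = Γ (diagonal ε)` has `p`-norm at most `‖Γ‖`,
hence Hilbert–Schmidt norm at most `k^{1/2 - 1/p} ‖Γ‖`. Averaging `‖∑ ε_i y_i‖_2²` over all signs
gives `∑ ‖y_i‖_2²` (orthogonality of Rademacher signs), so `k ‖Γ⁻¹‖⁻² ≤ k^{1 - 2/p} ‖Γ‖²`, that is
`‖Γ‖ ‖Γ⁻¹‖ ≥ k^{1/p}`. -/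

section OpNormBetween

variable {V W : Type*} [AddCommGroup V] [Module ℂ V] [AddCommGroup W] [Module ℂ W]
  {N₁ : V → ℝ} {N₂ : W → ℝ}

theorem opNormBetween_nonneg (f : V →ₗ[ℂ] W) : 0 ≤ opNormBetween N₁ N₂ f :=
  Real.sInf_nonneg fun _ hc => hc.1

theorem opNormBetween_le {f : V →ₗ[ℂ] W} {c : ℝ} (hc : 0 ≤ c) (h : ∀ v, N₂ (f v) ≤ c * N₁ v) :
    opNormBetween N₁ N₂ f ≤ c :=
  csInf_le ⟨0, fun _ hd => hd.1⟩ ⟨hc, h⟩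

theorem apply_le_opNormBetween_mul {f : V →ₗ[ℂ] W}
    (hf : ∃ c, 0 ≤ c ∧ ∀ v, N₂ (f v) ≤ c * N₁ v) {v : V} (hv : 0 ≤ N₁ v) :
    N₂ (f v) ≤ opNormBetween N₁ N₂ f * N₁ v := by
  rcases hv.eq_or_lt with hv | hv
  · obtain ⟨c, -, hc⟩ := hf
    simpa [← hv] using hc v
  · rw [← div_le_iff₀ hv]
    exact le_csInf hf fun c hc => (div_le_iff₀ hv).mpr (hc.2 v)

end OpNormBetween

theorem exists_bound_of_comparable {V W : Type*} [NormedAddCommGroup V] [NormedSpace ℂ V]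
    [FiniteDimensional ℂ V] [NormedAddCommGroup W] [NormedSpace ℂ W] {N₁ : V → ℝ} {N₂ : W → ℝ}
    {C₁ C₂ : ℝ} (hC₁ : 0 ≤ C₁) (hC₂ : 0 ≤ C₂) (h₁ : ∀ v, ‖v‖ ≤ C₁ * N₁ v)
    (h₂ : ∀ w, N₂ w ≤ C₂ * ‖w‖)
    (f : V →ₗ[ℂ] W) : ∃ c, 0 ≤ c ∧ ∀ v, N₂ (f v) ≤ c * N₁ v := by
  set g := LinearMap.toContinuousLinearMap f
  refine ⟨C₂ * ‖g‖ * C₁, by positivity, fun v => ?_⟩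
  calc N₂ (f v) ≤ C₂ * ‖g v‖ := h₂ _
    _ ≤ C₂ * (‖g‖ * (C₁ * N₁ v)) := by
        gcongr
        exact (g.le_opNorm v).trans (by gcongr; exact h₁ v)
    _ = C₂ * ‖g‖ * C₁ * N₁ v := by ring

section BMdist

variable {V : Type*} [AddCommGroup V] [Module ℂ V] {N₁ N₂ : V → ℝ}

theorem BMdist_le (Γ : V ≃ₗ[ℂ] V) :
    BMdist N₁ N₂ ≤ opNormBetween N₁ N₂ Γ.toLinearMap * opNormBetween N₂ N₁ Γ.symm.toLinearMap :=
  csInf_le ⟨0, fun _ ⟨_, ht⟩ => ht ▸ mul_nonneg (opNormBetween_nonneg _) (opNormBetween_nonneg _)⟩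
    ⟨Γ, rfl⟩

theorem le_BMdist {c : ℝ}
    (h : ∀ Γ : V ≃ₗ[ℂ] V,
      c ≤ opNormBetween N₁ N₂ Γ.toLinearMap * opNormBetween N₂ N₁ Γ.symm.toLinearMap) :
    c ≤ BMdist N₁ N₂ :=
  le_csInf ⟨_, LinearEquiv.refl ℂ V, rfl⟩ fun _ ⟨Γ, ht⟩ => ht ▸ h Γ

end BMdist

namespace Real

variable {ι : Type*} [Fintype ι] {s : ι → ℝ} {p : ℝ}

theorem le_sum_rpow_rpow_one_div (hp : 0 < p) (hs : ∀ i, 0 ≤ s i) (i : ι) :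
    s i ≤ (∑ j, s j ^ p) ^ (1 / p) := by
  calc s i = (s i ^ p) ^ (1 / p) := by rw [one_div, rpow_rpow_inv (hs i) hp.ne']
    _ ≤ (∑ j, s j ^ p) ^ (1 / p) :=
      rpow_le_rpow (rpow_nonneg (hs i) p)
        (Finset.single_le_sum (fun j _ => rpow_nonneg (hs j) p) (Finset.mem_univ i))
        (by positivity)

theorem sum_rpow_rpow_one_div_le {M : ℝ} (hp : 0 < p) (hs : ∀ i, 0 ≤ s i) (hM0 : 0 ≤ M)
    (hM : ∀ i, s i ≤ M) : (∑ i, s i ^ p) ^ (1 / p) ≤ (Fintype.card ι : ℝ) ^ (1 / p) * M := by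
  calc (∑ i, s i ^ p) ^ (1 / p) ≤ (∑ _i : ι, M ^ p) ^ (1 / p) :=
        rpow_le_rpow (Finset.sum_nonneg fun i _ => rpow_nonneg (hs i) p)
          (Finset.sum_le_sum fun i _ => rpow_le_rpow (hs i) (hM i) hp.le) (by positivity)
    _ = (Fintype.card ι : ℝ) ^ (1 / p) * M := by
        rw [Finset.sum_const, Finset.card_univ, nsmul_eq_mul, mul_rpow (by positivity)
          (by positivity), one_div, rpow_rpow_inv hM0 hp.ne']

theorem sum_rpow_le_rpow_sum {q : ℝ} (hq : 1 ≤ q) (hs : ∀ i, 0 ≤ s i) :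
    ∑ i, s i ^ q ≤ (∑ i, s i) ^ q := by
  have hS : 0 ≤ ∑ i, s i := Finset.sum_nonneg fun i _ => hs i
  have hsplit {u : ℝ} (hu : 0 ≤ u) : u ^ q = u * u ^ (q - 1) := by
    rw [← rpow_one_add' hu (by linarith), add_sub_cancel]
  calc ∑ i, s i ^ q = ∑ i, s i * s i ^ (q - 1) := by simp only [hsplit (hs _)]
    _ ≤ ∑ i, s i * (∑ j, s j) ^ (q - 1) :=
        Finset.sum_le_sum fun i _ => mul_le_mul_of_nonneg_left
          (rpow_le_rpow (hs i) (Finset.single_le_sum (fun j _ => hs j) (Finset.mem_univ i))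
            (by linarith)) (hs i)
    _ = (∑ i, s i) ^ q := by rw [← Finset.sum_mul, hsplit hS]

theorem sq_rpow_div_two {u : ℝ} (hu : 0 ≤ u) : (u ^ 2) ^ (p / 2) = u ^ p := by
  rw [← rpow_natCast, ← rpow_mul hu]
  norm_num [mul_div_cancel₀ p two_ne_zero]

theorem sum_rpow_rpow_one_div_sq_le (hp : 2 ≤ p) (hs : ∀ i, 0 ≤ s i) :
    ((∑ i, s i ^ p) ^ (1 / p)) ^ 2 ≤ ∑ i, s i ^ 2 := by
  have hP : 0 ≤ ∑ i, s i ^ p := Finset.sum_nonneg fun i _ => rpow_nonneg (hs i) p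
  have hS : 0 ≤ ∑ i, s i ^ 2 := by positivity
  have h := sum_rpow_le_rpow_sum (s := fun i => s i ^ 2) (q := p / 2) (by linarith)
    (fun i => by positivity)
  simp only [sq_rpow_div_two (hs _)] at h
  calc ((∑ i, s i ^ p) ^ (1 / p)) ^ 2 = (∑ i, s i ^ p) ^ (2 / p) := by
        rw [← rpow_natCast, ← rpow_mul hP]; congr 1; push_cast; ring
    _ ≤ ((∑ i, s i ^ 2) ^ (p / 2)) ^ (2 / p) := rpow_le_rpow hP h (by positivity)
    _ = ∑ i, s i ^ 2 := by rw [← rpow_mul hS]; field_simp; simp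

theorem sum_sq_le_card_rpow_mul (hp : 2 ≤ p) (hs : ∀ i, 0 ≤ s i) :
    ∑ i, s i ^ 2 ≤ (Fintype.card ι : ℝ) ^ (1 - 2 / p) * ((∑ i, s i ^ p) ^ (1 / p)) ^ 2 := by
  have hP : 0 ≤ ∑ i, s i ^ p := Finset.sum_nonneg fun i _ => rpow_nonneg (hs i) p
  have hS : 0 ≤ ∑ i, s i ^ 2 := by positivity
  have h := rpow_sum_le_const_mul_sum_rpow_of_nonneg (s := Finset.univ)
    (f := fun i => s i ^ 2) (p := p / 2) (by linarith) (fun i _ => by positivity)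
  simp only [sq_rpow_div_two (hs _), Finset.card_univ] at h
  calc ∑ i, s i ^ 2 = ((∑ i, s i ^ 2) ^ (p / 2)) ^ (2 / p) := by
        rw [← rpow_mul hS]; field_simp; simp
    _ ≤ ((Fintype.card ι : ℝ) ^ (p / 2 - 1) * ∑ i, s i ^ p) ^ (2 / p) :=
        rpow_le_rpow (by positivity) h (by positivity)
    _ = (Fintype.card ι : ℝ) ^ (1 - 2 / p) * ((∑ i, s i ^ p) ^ (1 / p)) ^ 2 := by
        rw [mul_rpow (by positivity) hP, ← rpow_mul (by positivity), ← rpow_natCast,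
          ← rpow_mul hP]
        congr 2
        · field_simp
        · push_cast; ring

theorem rpow_one_div_le_of_le_sq_mul_rpow {x c : ℝ} (hx : 0 < x) (hc : 0 ≤ c)
    (h : x ≤ c ^ 2 * x ^ (1 - 2 / p)) : x ^ (1 / p) ≤ c := by
  have hsq : x ^ (2 / p) ≤ c ^ 2 := by
    have hx' : x ^ (2 / p) * x ^ (1 - 2 / p) = x := by
      rw [← rpow_add hx, add_sub_cancel, rpow_one]
    exact le_of_mul_le_mul_right (hx'.trans_le h) (rpow_pos_of_pos hx _)
  have hpow : x ^ (2 / p) = (x ^ (1 / p)) ^ 2 := by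
    rw [← rpow_natCast, ← rpow_mul hx.le]; congr 1; push_cast; ring
  exact (pow_le_pow_iff_left₀ (by positivity) hc two_ne_zero).mp (hpow ▸ hsq)

end Real

section Rademacher

variable {ι : Type*} [Fintype ι] [DecidableEq ι]

theorem sum_units_int_mul_eq (i j : ι) :
    ∑ ε : ι → ℤˣ, (ε i * ε j : ℤ) = if i = j then 2 ^ Fintype.card ι else 0 := by
  split_ifs with hij
  · subst hij
    simp [Int.units_coe_mul_self, Fintype.card_pi]
  · -- multiplying `ε` by the sign flip at `i` permutes the summands and negates each of them
    have hflip : ∑ ε : ι → ℤˣ, (ε i * ε j : ℤ) = -∑ ε : ι → ℤˣ, (ε i * ε j : ℤ) := by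
      conv_lhs => rw [← Equiv.sum_comp (Equiv.mulLeft (Pi.mulSingle i (-1) : ι → ℤˣ))]
      rw [← Finset.sum_neg_distrib]
      refine Finset.sum_congr rfl fun ε _ => ?_
      simp [Ne.symm hij]
    omega

variable {E : Type*} [NormedAddCommGroup E] [InnerProductSpace ℝ E]

theorem sum_norm_sq_sum_units_smul (y : ι → E) :
    ∑ ε : ι → ℤˣ, ‖∑ i, ε i • y i‖ ^ 2 = 2 ^ Fintype.card ι * ∑ i, ‖y i‖ ^ 2 := by
  have hexpand (ε : ι → ℤˣ) :
      ‖∑ i, ε i • y i‖ ^ 2 = ∑ i, ∑ j, ((ε i * ε j : ℤ) : ℝ) * inner ℝ (y i) (y j) := by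
    rw [← real_inner_self_eq_norm_sq, sum_inner]
    refine Finset.sum_congr rfl fun i _ => ?_
    rw [inner_sum]
    refine Finset.sum_congr rfl fun j _ => ?_
    simp only [Units.smul_def, ← Int.cast_smul_eq_zsmul ℝ, real_inner_smul_left,
      real_inner_smul_right]
    push_cast
    ring
  calc ∑ ε : ι → ℤˣ, ‖∑ i, ε i • y i‖ ^ 2
      = ∑ i, ∑ j, ((∑ ε : ι → ℤˣ, (ε i * ε j : ℤ) : ℤ) : ℝ) * inner ℝ (y i) (y j) := by
        simp only [hexpand, Int.cast_sum, Finset.sum_mul]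
        rw [Finset.sum_comm]
        exact Finset.sum_congr rfl fun i _ => Finset.sum_comm
    _ = 2 ^ Fintype.card ι * ∑ i, ‖y i‖ ^ 2 := by
        simp [sum_units_int_mul_eq, Finset.mul_sum]

variable {m n : Type*} [Fintype m] [Fintype n]

theorem sum_sum_sum_norm_sq_sum_units_smul (y : ι → Matrix m n E) :
    ∑ ε : ι → ℤˣ, ∑ a, ∑ b, ‖(∑ i, ε i • y i) a b‖ ^ 2 =
      2 ^ Fintype.card ι * ∑ i, ∑ a, ∑ b, ‖y i a b‖ ^ 2 := by
  calc ∑ ε : ι → ℤˣ, ∑ a, ∑ b, ‖(∑ i, ε i • y i) a b‖ ^ 2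
      = ∑ a, ∑ b, ∑ ε : ι → ℤˣ, ‖∑ i, ε i • y i a b‖ ^ 2 := by
        simp only [Matrix.sum_apply, Matrix.smul_apply]
        rw [Finset.sum_comm]
        exact Finset.sum_congr rfl fun a _ => Finset.sum_comm
    _ = 2 ^ Fintype.card ι * ∑ i, ∑ a, ∑ b, ‖y i a b‖ ^ 2 := by
        simp only [sum_norm_sq_sum_units_smul, Finset.mul_sum]
        exact (Finset.sum_congr rfl fun a _ => Finset.sum_comm).trans Finset.sum_comm

theorem sum_sum_sum_norm_sq_le_of_forall_units_smul {C : ℝ} (y : ι → Matrix m n E)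
    (h : ∀ ε : ι → ℤˣ, ∑ a, ∑ b, ‖(∑ i, ε i • y i) a b‖ ^ 2 ≤ C) :
    ∑ i, ∑ a, ∑ b, ‖y i a b‖ ^ 2 ≤ C := by
  refine le_of_mul_le_mul_left ?_ (by positivity : (0 : ℝ) < 2 ^ Fintype.card ι)
  calc 2 ^ Fintype.card ι * ∑ i, ∑ a, ∑ b, ‖y i a b‖ ^ 2
      = ∑ ε : ι → ℤˣ, ∑ a, ∑ b, ‖(∑ i, ε i • y i) a b‖ ^ 2 :=
        (sum_sum_sum_norm_sq_sum_units_smul y).symm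
    _ ≤ ∑ _ε : ι → ℤˣ, C := Finset.sum_le_sum fun ε _ => h ε
    _ = 2 ^ Fintype.card ι * C := by simp [Fintype.card_pi]

end Rademacher

open Matrix
open scoped Matrix.Norms.L2Operator MatrixOrder

section Matrices

variable {k : ℕ}

theorem matrixOpNorm_eq_norm (x : Matrix (Fin k) (Fin k) ℂ) : matrixOpNorm x = ‖x‖ := rfl

theorem singVals_nonneg (x : Matrix (Fin k) (Fin k) ℂ) (i : Fin k) : 0 ≤ singVals x i :=
  Real.sqrt_nonneg _

theorem singVals_sq (x : Matrix (Fin k) (Fin k) ℂ) (i : Fin k) :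
    singVals x i ^ 2 = (posSemidef_conjTranspose_mul_self x).1.eigenvalues i :=
  Real.sq_sqrt ((posSemidef_conjTranspose_mul_self x).eigenvalues_nonneg i)

theorem sum_singVals_sq (x : Matrix (Fin k) (Fin k) ℂ) :
    ∑ i, singVals x i ^ 2 = ∑ i, ∑ j, ‖x i j‖ ^ 2 := by
  calc ∑ i, singVals x i ^ 2 = (xᴴ * x).trace.re := by
        simp [singVals_sq, (posSemidef_conjTranspose_mul_self x).1.trace_eq_sum_eigenvalues]
    _ = ∑ i, ∑ j, ‖x i j‖ ^ 2 := by
        simp only [trace, diag_apply, mul_apply, conjTranspose_apply, RCLike.star_def,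
          RCLike.conj_mul, Complex.coe_algebraMap, ← Complex.ofReal_pow, Complex.re_sum,
          Complex.ofReal_re]
        exact Finset.sum_comm

theorem singVals_le_matrixOpNorm (x : Matrix (Fin k) (Fin k) ℂ) (i : Fin k) :
    singVals x i ≤ matrixOpNorm x := by
  have : Nonempty (Fin k) := ⟨i⟩
  have hx := posSemidef_conjTranspose_mul_self x
  have hmem : (hx.1.eigenvalues i : ℂ) ∈ spectrum ℂ (xᴴ * x) := by
    rw [hx.1.spectrum_eq_image_range]
    exact ⟨_, Set.mem_range_self i, rfl⟩
  have h := spectrum.norm_le_norm_of_mem hmem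
  rw [l2_opNorm_conjTranspose_mul_self, Complex.norm_of_nonneg (hx.eigenvalues_nonneg i),
    ← singVals_sq, ← sq] at h
  exact (sq_le_sq₀ (singVals_nonneg x i) (norm_nonneg x)).mp h

theorem exists_singVals_eq_matrixOpNorm (hk : 0 < k) (x : Matrix (Fin k) (Fin k) ℂ) :
    ∃ i, singVals x i = matrixOpNorm x := by
  have : Nonempty (Fin k) := ⟨⟨0, hk⟩⟩
  have hx := posSemidef_conjTranspose_mul_self x
  have hmem := CStarAlgebra.norm_mem_spectrum_of_nonneg (nonneg_iff_posSemidef.mpr hx)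
  rw [hx.1.spectrum_real_eq_range_eigenvalues, l2_opNorm_conjTranspose_mul_self] at hmem
  obtain ⟨i, hi⟩ := hmem
  exact ⟨i, by rw [matrixOpNorm_eq_norm, singVals, hi, Real.sqrt_mul_self (norm_nonneg x)]⟩

variable {p : ℝ}

theorem schattenNorm_nonneg (x : Matrix (Fin k) (Fin k) ℂ) : 0 ≤ schattenNorm p x :=
  Real.rpow_nonneg (Finset.sum_nonneg fun i _ => Real.rpow_nonneg (singVals_nonneg x i) p) _

theorem matrixOpNorm_le_schattenNorm (hk : 0 < k) (hp : 0 < p) (x : Matrix (Fin k) (Fin k) ℂ) :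
    matrixOpNorm x ≤ schattenNorm p x := by
  obtain ⟨i, hi⟩ := exists_singVals_eq_matrixOpNorm hk x
  exact hi ▸ Real.le_sum_rpow_rpow_one_div hp (singVals_nonneg x) i

theorem schattenNorm_le_rpow_mul_matrixOpNorm (hp : 0 < p) (x : Matrix (Fin k) (Fin k) ℂ) :
    schattenNorm p x ≤ (k : ℝ) ^ (1 / p) * matrixOpNorm x := by
  have h := Real.sum_rpow_rpow_one_div_le hp (singVals_nonneg x) (norm_nonneg _)
    (singVals_le_matrixOpNorm x)
  rwa [Fintype.card_fin] at h

theorem schattenNorm_sq_le_sum_norm_sq (hp : 2 ≤ p) (x : Matrix (Fin k) (Fin k) ℂ) :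
    schattenNorm p x ^ 2 ≤ ∑ i, ∑ j, ‖x i j‖ ^ 2 :=
  sum_singVals_sq x ▸ Real.sum_rpow_rpow_one_div_sq_le hp (singVals_nonneg x)

theorem sum_norm_sq_le_rpow_mul_schattenNorm_sq (hp : 2 ≤ p) (x : Matrix (Fin k) (Fin k) ℂ) :
    ∑ i, ∑ j, ‖x i j‖ ^ 2 ≤ (k : ℝ) ^ (1 - 2 / p) * schattenNorm p x ^ 2 := by
  have h := Real.sum_sq_le_card_rpow_mul hp (singVals_nonneg x)
  rwa [Fintype.card_fin, sum_singVals_sq] at h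

theorem sum_units_smul_single_eq_diagonal (ε : Fin k → ℤˣ) :
    ∑ i, ε i • (single i i 1 : Matrix (Fin k) (Fin k) ℂ) = diagonal fun i => ε i • 1 := by
  simp only [smul_single, sum_single_eq_diagonal]

theorem matrixOpNorm_diagonal_units_smul_one_le (ε : Fin k → ℤˣ) :
    matrixOpNorm (diagonal fun i => ε i • 1 : Matrix (Fin k) (Fin k) ℂ) ≤ 1 := by
  rw [matrixOpNorm_eq_norm, l2_opNorm_diagonal]
  exact pi_norm_le_iff_of_nonneg zero_le_one |>.mpr fun i => by
    simp [Units.smul_def, abs_unit_intCast]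

theorem matrixOpNorm_single_one (i : Fin k) :
    matrixOpNorm (single i i 1 : Matrix (Fin k) (Fin k) ℂ) = 1 := by
  rw [matrixOpNorm_eq_norm, ← diagonal_single, l2_opNorm_diagonal, Pi.norm_single, norm_one]

theorem rpow_one_div_le_mul_of_bounds (hk : 0 < k) (hp : 2 ≤ p)
    (Γ : Matrix (Fin k) (Fin k) ℂ ≃ₗ[ℂ] Matrix (Fin k) (Fin k) ℂ) {a b : ℝ} (ha0 : 0 ≤ a)
    (hb0 : 0 ≤ b) (ha : ∀ v, schattenNorm p (Γ v) ≤ a * matrixOpNorm v)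
    (hb : ∀ w, matrixOpNorm (Γ.symm w) ≤ b * schattenNorm p w) :
    (k : ℝ) ^ (1 / p) ≤ a * b := by
  set y : Fin k → Matrix (Fin k) (Fin k) ℂ := fun i => Γ (single i i 1)
  have hy (i : Fin k) : 1 ≤ b ^ 2 * ∑ r, ∑ c, ‖y i r c‖ ^ 2 := by
    have h1 : 1 ≤ b * schattenNorm p (y i) := by
      simpa [y, matrixOpNorm_single_one] using hb (y i)
    calc (1 : ℝ) ≤ (b * schattenNorm p (y i)) ^ 2 := one_le_pow₀ h1
      _ ≤ b ^ 2 * ∑ r, ∑ c, ‖y i r c‖ ^ 2 := by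
        rw [mul_pow]; gcongr; exact schattenNorm_sq_le_sum_norm_sq hp _
  have hε (ε : Fin k → ℤˣ) :
      ∑ r, ∑ c, ‖(∑ i, ε i • y i) r c‖ ^ 2 ≤ (k : ℝ) ^ (1 - 2 / p) * a ^ 2 := by
    have hΓ : ∑ i, ε i • y i = Γ (diagonal fun i => ε i • 1) := by
      rw [← sum_units_smul_single_eq_diagonal, map_sum]
      simp only [y, Units.smul_def, map_zsmul]
    have h1 : schattenNorm p (∑ i, ε i • y i) ≤ a := by
      calc schattenNorm p (∑ i, ε i • y i) ≤ a * matrixOpNorm (diagonal fun i => ε i • 1) :=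
            hΓ ▸ ha _
        _ ≤ a := mul_le_of_le_one_right ha0 (matrixOpNorm_diagonal_units_smul_one_le ε)
    calc _ ≤ (k : ℝ) ^ (1 - 2 / p) * schattenNorm p (∑ i, ε i • y i) ^ 2 :=
          sum_norm_sq_le_rpow_mul_schattenNorm_sq hp _
      _ ≤ (k : ℝ) ^ (1 - 2 / p) * a ^ 2 := by gcongr; exact schattenNorm_nonneg _
  have hk_le : (k : ℝ) ≤ (a * b) ^ 2 * (k : ℝ) ^ (1 - 2 / p) := by
    calc (k : ℝ) = ∑ _i : Fin k, (1 : ℝ) := by simp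
      _ ≤ ∑ i, b ^ 2 * ∑ r, ∑ c, ‖y i r c‖ ^ 2 := Finset.sum_le_sum fun i _ => hy i
      _ = b ^ 2 * ∑ i, ∑ r, ∑ c, ‖y i r c‖ ^ 2 := by rw [Finset.mul_sum]
      _ ≤ b ^ 2 * ((k : ℝ) ^ (1 - 2 / p) * a ^ 2) := by
        gcongr; exact sum_sum_sum_norm_sq_le_of_forall_units_smul y hε
      _ = (a * b) ^ 2 * (k : ℝ) ^ (1 - 2 / p) := by ring
  exact Real.rpow_one_div_le_of_le_sq_mul_rpow (by exact_mod_cast hk) (by positivity) hk_le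

theorem rpow_one_div_le_opNormBetween_mul (hk : 0 < k) (hp : 2 ≤ p)
    (Γ : Matrix (Fin k) (Fin k) ℂ ≃ₗ[ℂ] Matrix (Fin k) (Fin k) ℂ) :
    (k : ℝ) ^ (1 / p) ≤ opNormBetween matrixOpNorm (schattenNorm p) Γ.toLinearMap *
      opNormBetween (schattenNorm p) matrixOpNorm Γ.symm.toLinearMap := by
  have hp0 : 0 < p := by linarith
  refine rpow_one_div_le_mul_of_bounds hk hp Γ (opNormBetween_nonneg _) (opNormBetween_nonneg _)
    (fun v => ?_) (fun w => ?_)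
  · exact apply_le_opNormBetween_mul (exists_bound_of_comparable zero_le_one (by positivity)
      (fun v => (one_mul _).ge) (schattenNorm_le_rpow_mul_matrixOpNorm hp0) Γ.toLinearMap)
      (norm_nonneg _)
  · exact apply_le_opNormBetween_mul (exists_bound_of_comparable zero_le_one zero_le_one
      (fun v => by rw [one_mul]; exact matrixOpNorm_le_schattenNorm hk hp0 v)
      (fun w => (one_mul _).ge) Γ.symm.toLinearMap) (schattenNorm_nonneg w)

end Matrices

/-- for `2 ≤ p < ∞`, the Banach–Mazur distance between `C^k_∞`
(operator norm) and `C^k_p` (Schatten `p`-norm) equals `k^{1/p}`. -/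
theorem banachMazur_schatten_infty_p (k : ℕ) (hk : 1 ≤ k) (p : ℝ) (hp : 2 ≤ p) :
    BMdist (matrixOpNorm (k := k)) (schattenNorm p) = (k : ℝ) ^ (1 / p) := by
  have hp0 : 0 < p := by linarith
  refine le_antisymm ((BMdist_le (LinearEquiv.refl ℂ _)).trans ?_)
    (le_BMdist (rpow_one_div_le_opNormBetween_mul hk hp))
  calc _ ≤ (k : ℝ) ^ (1 / p) * 1 :=
        mul_le_mul (opNormBetween_le (by positivity) (schattenNorm_le_rpow_mul_matrixOpNorm hp0))
          (opNormBetween_le zero_le_one fun v => by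
            rw [one_mul]; exact matrixOpNorm_le_schattenNorm hk hp0 v)
          (opNormBetween_nonneg _) (by positivity)
    _ = (k : ℝ) ^ (1 / p) := mul_one _
end

section
/- There is a universal constant a > 0 with the following property: if X is an n-dimensional subspace of C^k_∞ (k×k matrices with operator norm) that is K-isomorphic to ℓ^n_1, then n ≤ a K² log k. -/
open Finset Real
open scoped Nat Matrix Matrix.Norms.L2Operator

def boolSign (b : Bool) : ℝ := if b then 1 else -1

def rademacherSum {ι M : Type*} [Fintype ι] [AddCommMonoid M] [Module ℝ M] (A : ι → M)
    (ε : ι → Bool) : M :=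
  ∑ i, boolSign (ε i) • A i

lemma norm_prod_ofFn_le_one {R : Type*} [SeminormedRing R] {m : ℕ} (hm : m ≠ 0) {w : Fin m → R}
    (hw : ∀ t, ‖w t‖ ≤ 1) : ‖(List.ofFn w).prod‖ ≤ 1 := by
  refine (List.norm_prod_le' (by simpa using hm)).trans ?_
  rw [List.map_ofFn, List.prod_ofFn]
  exact prod_le_one (fun _ _ => norm_nonneg _) fun t _ => hw t

namespace Matrix

variable {𝕜 : Type*} [RCLike 𝕜] {m n : Type*} [Fintype m] [Fintype n]

lemma re_trace_conjTranspose_mul_self (M : Matrix m n 𝕜) :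
    RCLike.re (Mᴴ * M).trace = ∑ i, ∑ j, ‖M i j‖ ^ 2 := by
  rw [sum_comm]
  simp only [trace, diag_apply, mul_apply, conjTranspose_apply, RCLike.star_def, RCLike.conj_mul,
    map_sum]
  norm_cast

variable [DecidableEq n]

lemma norm_apply_le_l2_opNorm (M : Matrix m n 𝕜) (i : m) (j : n) : ‖M i j‖ ≤ ‖M‖ := by
  have h := M.l2_opNorm_mulVec (PiLp.single 2 j 1)
  rw [PiLp.norm_single, norm_one, mul_one] at h
  refine le_trans (le_of_eq ?_) ((PiLp.norm_apply_le _ i).trans h)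
  simp [mulVec_single]

lemma norm_trace_le_card_mul_l2_opNorm [DecidableEq m] (M : Matrix m m 𝕜) :
    ‖M.trace‖ ≤ Fintype.card m * ‖M‖ :=
  calc ‖M.trace‖ ≤ ∑ i, ‖M i i‖ := norm_sum_le _ _
    _ ≤ ∑ _i : m, ‖M‖ := sum_le_sum fun i _ => M.norm_apply_le_l2_opNorm i i
    _ = Fintype.card m * ‖M‖ := by simp

lemma l2_opNorm_sq_le_sum_norm_sq (M : Matrix m n 𝕜) : ‖M‖ ^ 2 ≤ ∑ i, ∑ j, ‖M i j‖ ^ 2 := by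
  suffices ‖M‖ ≤ √(∑ i, ∑ j, ‖M i j‖ ^ 2) from
    (pow_le_pow_left₀ (norm_nonneg _) this 2).trans (Real.sq_sqrt (by positivity)).le
  rw [l2_opNorm_def]
  refine ContinuousLinearMap.opNorm_le_bound _ (by positivity) fun x => ?_
  have hrow (i : m) : ‖(M *ᵥ x.ofLp) i‖ ^ 2 ≤ (∑ j, ‖M i j‖ ^ 2) * ‖x‖ ^ 2 := by
    rw [EuclideanSpace.norm_sq_eq]
    calc ‖(M *ᵥ x.ofLp) i‖ ^ 2 ≤ (∑ j, ‖M i j‖ * ‖x j‖) ^ 2 := by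
          gcongr
          exact (norm_sum_le _ _).trans_eq (by simp [norm_mul])
      _ ≤ _ := sum_mul_sq_le_sq_mul_sq _ _ _
  rw [← Real.sqrt_sq (norm_nonneg _), ← Real.sqrt_sq (norm_nonneg x),
    ← Real.sqrt_mul (by positivity), sum_mul]
  gcongr
  simpa [EuclideanSpace.norm_sq_eq] using sum_le_sum fun i _ => hrow i

lemma l2_opNorm_pow_le_re_trace_pow {P : Matrix n n 𝕜} (hP : IsSelfAdjoint P) (s : ℕ) :
    ‖P‖ ^ 2 ^ (s + 1) ≤ RCLike.re (P ^ 2 ^ (s + 1)).trace := by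
  have hPs : (P ^ 2 ^ s)ᴴ * P ^ 2 ^ s = P ^ 2 ^ (s + 1) := by
    rw [← star_eq_conjTranspose, (hP.pow _).star_eq, ← pow_add, ← two_mul, pow_succ']
  calc ‖P‖ ^ 2 ^ (s + 1) = ‖P ^ 2 ^ s‖ ^ 2 := by rw [hP.norm_pow_two_pow, ← pow_mul, pow_succ]
    _ ≤ ∑ i, ∑ j, ‖(P ^ 2 ^ s) i j‖ ^ 2 := l2_opNorm_sq_le_sum_norm_sq _
    _ = RCLike.re (P ^ 2 ^ (s + 1)).trace := by rw [← hPs, re_trace_conjTranspose_mul_self]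

end Matrix

theorem sum_smul_pow_eq_sum_ofFn {R A ι : Type*} [CommSemiring R] [Semiring A] [Algebra R A]
    [Fintype ι] (c : ι → R) (b : ι → A) (m : ℕ) :
    (∑ i, c i • b i) ^ m = ∑ g : Fin m → ι, (∏ t, c (g t)) • (List.ofFn fun t => b (g t)).prod := by
  induction m with
  | zero => simp
  | succ m ih =>
    rw [pow_succ', ih, sum_mul_sum, ← Fintype.sum_prod_type']
    refine Fintype.sum_equiv (Fin.consEquiv fun _ => ι) _ _ fun p => ?_
    simp only [Fin.consEquiv_apply, Fin.prod_univ_succ, Fin.cons_zero, Fin.cons_succ,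
      List.ofFn_succ, List.prod_cons, smul_mul_smul_comm]

section Rademacher

variable {ι : Type*} [Fintype ι]

lemma sum_prod_boolSign_nonneg {κ : Type*} [Fintype κ] [DecidableEq κ] (h : ι → κ) :
    0 ≤ ∑ ε : κ → Bool, ∏ t, boolSign (ε (h t)) := by
  have hfiber (ε : κ → Bool) :
      ∏ t, boolSign (ε (h t)) = ∏ i, boolSign (ε i) ^ Fintype.card {t // h t = i} := by
    rw [← Fintype.prod_fiberwise' h fun i => boolSign (ε i)]
    simp
  simp_rw [hfiber]
  rw [← Fintype.prod_sum (fun i (b : Bool) => boolSign b ^ Fintype.card {t // h t = i})]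
  refine prod_nonneg fun i _ => ?_
  rcases neg_one_pow_eq_or ℝ (Fintype.card {t // h t = i}) with h | h <;> simp [boolSign, h]

variable [DecidableEq ι]

lemma sum_cosh_mul_sum_boolSign (μ : ℝ) :
    ∑ ε : ι → Bool, cosh (μ * ∑ i, boolSign (ε i)) = (2 * cosh μ) ^ Fintype.card ι := by
  have hexp (μ : ℝ) :
      ∑ ε : ι → Bool, exp (μ * ∑ i, boolSign (ε i)) = (2 * cosh μ) ^ Fintype.card ι := by
    simp_rw [mul_sum, exp_sum]
    rw [← Fintype.prod_sum (fun _ (b : Bool) => exp (μ * boolSign b))]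
    simp [boolSign, cosh_eq]
    ring
  calc ∑ ε : ι → Bool, cosh (μ * ∑ i, boolSign (ε i))
      = (∑ ε : ι → Bool, exp (μ * ∑ i, boolSign (ε i))
          + ∑ ε : ι → Bool, exp (-μ * ∑ i, boolSign (ε i))) / 2 := by
        rw [← sum_add_distrib, sum_div]
        simp_rw [cosh_eq, neg_mul]
    _ = (2 * cosh μ) ^ Fintype.card ι := by rw [hexp, hexp, cosh_neg]; ring

lemma pow_two_mul_le_factorial_mul_cosh (x : ℝ) (m : ℕ) : x ^ (2 * m) ≤ (2 * m)! * cosh x := by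
  have h := le_hasSum (hasSum_cosh x) m fun j _ =>
    div_nonneg ((even_two_mul j).pow_nonneg x) (by positivity)
  rwa [div_le_iff₀' (by positivity)] at h

lemma sum_sum_boolSign_pow_le {m : ℕ} (hm : 0 < m) (hι : 0 < Fintype.card ι) :
    ∑ ε : ι → Bool, (∑ i, boolSign (ε i)) ^ (2 * m) ≤
      2 ^ Fintype.card ι * (2 * exp 1 * m * Fintype.card ι) ^ m := by
  have hm' : (m : ℝ) ≠ 0 := by positivity
  have hι' : (Fintype.card ι : ℝ) ≠ 0 := by positivity
  -- `L ^ 2 = 2m / card ι` balances `L ^ (-2m)` against `exp (card ι * L ^ 2 / 2)`.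
  set L := √(2 * m / Fintype.card ι)
  have hL : 0 < L := sqrt_pos.mpr (by positivity)
  have hL2 : L ^ 2 = 2 * m / Fintype.card ι := sq_sqrt (by positivity)
  have hexp : (2 * exp (L ^ 2 / 2)) ^ Fintype.card ι = 2 ^ Fintype.card ι * exp 1 ^ m := by
    rw [mul_pow, ← exp_nat_mul, ← exp_nat_mul, hL2]
    congr 2
    field_simp
  calc ∑ ε : ι → Bool, (∑ i, boolSign (ε i)) ^ (2 * m)
      ≤ ∑ ε : ι → Bool, (2 * m)! / L ^ (2 * m) * cosh (L * ∑ i, boolSign (ε i)) := by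
        gcongr with ε
        rw [div_mul_eq_mul_div, le_div_iff₀ (by positivity), ← mul_pow, mul_comm]
        exact pow_two_mul_le_factorial_mul_cosh _ _
    _ = (2 * m)! / L ^ (2 * m) * (2 * cosh L) ^ Fintype.card ι := by
        rw [← mul_sum, sum_cosh_mul_sum_boolSign]
    _ ≤ (2 * m)! / L ^ (2 * m) * (2 * exp (L ^ 2 / 2)) ^ Fintype.card ι := by
        gcongr
        exact cosh_le_exp_half_sq L
    _ ≤ ((2 * m) ^ 2) ^ m / (L ^ 2) ^ m * (2 ^ Fintype.card ι * exp 1 ^ m) := by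
        rw [hexp, ← pow_mul, ← pow_mul]
        gcongr
        exact_mod_cast Nat.factorial_le_pow _
    _ = 2 ^ Fintype.card ι * ((2 * m) ^ 2 / L ^ 2 * exp 1) ^ m := by
        rw [mul_pow _ (exp 1), div_pow]
        ring
    _ = 2 ^ Fintype.card ι * (2 * exp 1 * m * Fintype.card ι) ^ m := by
        rw [hL2]
        field_simp

end Rademacher

section MomentComparison

variable {𝕜 : Type*} [RCLike 𝕜] {n ι : Type*} [Fintype n] [DecidableEq n] [Fintype ι]

lemma rademacherSum_mul_conjTranspose (A : ι → Matrix n n 𝕜) (ε : ι → Bool) :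
    rademacherSum A ε * (rademacherSum A ε)ᴴ =
      ∑ p : ι × ι, (boolSign (ε p.1) * boolSign (ε p.2)) • (A p.1 * (A p.2)ᴴ) := by
  rw [rademacherSum, Matrix.conjTranspose_sum, sum_mul_sum, ← Fintype.sum_prod_type']
  refine Fintype.sum_congr _ _ fun p => ?_
  rw [Matrix.conjTranspose_smul, star_trivial, smul_mul_smul_comm]

lemma re_trace_rademacherSum_mul_conjTranspose_pow (A : ι → Matrix n n 𝕜) (ε : ι → Bool) (m : ℕ) :
    RCLike.re ((rademacherSum A ε * (rademacherSum A ε)ᴴ) ^ m).trace =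
      ∑ g : Fin m → ι × ι, (∏ t, boolSign (ε (g t).1) * boolSign (ε (g t).2)) *
        RCLike.re (List.ofFn fun t => A (g t).1 * (A (g t).2)ᴴ).prod.trace := by
  rw [rademacherSum_mul_conjTranspose, sum_smul_pow_eq_sum_ofFn, Matrix.trace_sum, map_sum]
  simp only [Matrix.trace_smul, RCLike.smul_re]

variable [DecidableEq ι]

theorem sum_norm_rademacherSum_pow_le (A : ι → Matrix n n 𝕜) (hA : ∀ i, ‖A i‖ ≤ 1) (s : ℕ) :
    ∑ ε : ι → Bool, ‖rademacherSum A ε‖ ^ (2 * 2 ^ (s + 1)) ≤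
      Fintype.card n * ∑ ε : ι → Bool, (∑ i, boolSign (ε i)) ^ (2 * 2 ^ (s + 1)) := by
  set m := 2 ^ (s + 1)
  have hword (g : Fin m → ι × ι) :
      RCLike.re (List.ofFn fun t => A (g t).1 * (A (g t).2)ᴴ).prod.trace ≤ Fintype.card n := by
    refine (RCLike.re_le_norm _).trans <| (Matrix.norm_trace_le_card_mul_l2_opNorm _).trans <|
      mul_le_of_le_one_right (by positivity) <| norm_prod_ofFn_le_one (by positivity) fun t => ?_
    grw [norm_mul_le, Matrix.l2_opNorm_conjTranspose, hA, hA, one_mul]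
  have hcoef (g : Fin m → ι × ι) :
      0 ≤ ∑ ε : ι → Bool, ∏ t, boolSign (ε (g t).1) * boolSign (ε (g t).2) := by
    simpa [Fintype.prod_prod_type, Fintype.prod_bool, prod_mul_distrib] using
      sum_prod_boolSign_nonneg fun x : Fin m × Bool => bif x.2 then (g x.1).1 else (g x.1).2
  have hsign (ε : ι → Bool) : (∑ i, boolSign (ε i)) ^ (2 * m) =
      ∑ g : Fin m → ι × ι, ∏ t, boolSign (ε (g t).1) * boolSign (ε (g t).2) := by
    rw [pow_mul, sq, sum_mul_sum, ← Fintype.sum_prod_type', Fintype.sum_pow]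
  calc ∑ ε : ι → Bool, ‖rademacherSum A ε‖ ^ (2 * m)
      ≤ ∑ ε : ι → Bool, RCLike.re ((rademacherSum A ε * (rademacherSum A ε)ᴴ) ^ m).trace := by
        gcongr with ε
        rw [pow_mul, sq, ← CStarRing.norm_self_mul_star]
        exact Matrix.l2_opNorm_pow_le_re_trace_pow (IsSelfAdjoint.mul_star_self _) s
    _ = ∑ g : Fin m → ι × ι, (∑ ε : ι → Bool, ∏ t, boolSign (ε (g t).1) * boolSign (ε (g t).2)) *
          RCLike.re (List.ofFn fun t => A (g t).1 * (A (g t).2)ᴴ).prod.trace := by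
        simp_rw [re_trace_rademacherSum_mul_conjTranspose_pow, sum_mul]
        exact sum_comm
    _ ≤ ∑ g : Fin m → ι × ι, (∑ ε : ι → Bool, ∏ t, boolSign (ε (g t).1) * boolSign (ε (g t).2)) *
          Fintype.card n := by
        gcongr with g
        exacts [hcoef g, hword g]
    _ = Fintype.card n * ∑ ε : ι → Bool, (∑ i, boolSign (ε i)) ^ (2 * m) := by
        simp_rw [hsign, ← sum_mul]
        rw [sum_comm, mul_comm]

end MomentComparison

lemma card_le_mul_norm_rademacherSum {𝕜 E ι : Type*} [RCLike 𝕜] [SeminormedAddCommGroup E]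
    [Module 𝕜 E] [Module ℝ E] [IsScalarTower ℝ 𝕜 E] [Fintype ι] [DecidableEq ι]
    (Γ : PiLp 1 (fun _ : ι => 𝕜) →ₗ[𝕜] E) {K : ℝ} (hΓ : ∀ c, ‖c‖ ≤ K * ‖Γ c‖) (ε : ι → Bool) :
    (Fintype.card ι : ℝ) ≤ K * ‖rademacherSum (fun i => Γ (PiLp.single 1 i 1)) ε‖ := by
  have hsum : (WithLp.toLp 1 fun i => (boolSign (ε i) : 𝕜)) =
      ∑ i, boolSign (ε i) • PiLp.single 1 i (1 : 𝕜) := by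
    ext j
    simp [Pi.single_apply, RCLike.real_smul_eq_coe_mul]
  have hnorm : ‖WithLp.toLp 1 fun i => (boolSign (ε i) : 𝕜)‖ = Fintype.card ι := by
    simp [PiLp.norm_eq_of_L1, boolSign, apply_ite]
  have h := hΓ (WithLp.toLp 1 fun i => (boolSign (ε i) : 𝕜))
  rwa [hnorm, hsum, map_sum, Fintype.sum_congr _ _ fun i => LinearMap.map_smul_of_tower Γ _ _] at h

lemma exists_two_pow_succ_between {x : ℝ} (hx : 0 < x) :
    ∃ s : ℕ, x ≤ 2 ^ (s + 1) ∧ (2 : ℝ) ^ (s + 1) ≤ 2 * x + 2 := by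
  refine ⟨Nat.log 2 ⌈x⌉₊, ?_, ?_⟩
  · calc x ≤ ⌈x⌉₊ := Nat.le_ceil x
      _ ≤ (2 : ℝ) ^ (Nat.log 2 ⌈x⌉₊ + 1) := by
        exact_mod_cast (Nat.lt_pow_succ_log_self one_lt_two _).le
  · have hlog : (2 : ℝ) ^ Nat.log 2 ⌈x⌉₊ ≤ ⌈x⌉₊ := by
      exact_mod_cast Nat.pow_log_le_self 2 (Nat.ceil_pos.mpr hx).ne'
    rw [pow_succ]
    linarith [Nat.ceil_lt_add_one hx.le]

lemma le_of_div_pow_le_mul_pow {N K k : ℝ} {m : ℕ} (hm : m ≠ 0) (hN : 0 ≤ N) (hK : 0 < K)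
    (hk : 0 < k) (hkm : log k ≤ m) (h : (N / K) ^ (2 * m) ≤ k * (2 * exp 1 * m * N) ^ m) :
    N ≤ 2 * exp 2 * m * K ^ 2 := by
  rcases hN.eq_or_lt with rfl | hN
  · positivity
  have hk : k ≤ exp 1 ^ m := by
    rw [← exp_nat_mul, mul_one, ← exp_log hk]
    exact exp_le_exp.mpr hkm
  refine le_of_pow_le_pow_left₀ hm (by positivity) (le_of_mul_le_mul_right ?_ (pow_pos hN m))
  calc N ^ m * N ^ m = (N / K) ^ (2 * m) * (K ^ 2) ^ m := by
        rw [← mul_pow, pow_mul, ← mul_pow, div_pow, div_mul_cancel₀ _ (by positivity), sq]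
    _ ≤ exp 1 ^ m * (2 * exp 1 * m * N) ^ m * (K ^ 2) ^ m := by gcongr; exact h.trans (by gcongr)
    _ = (2 * exp 2 * m * K ^ 2) ^ m * N ^ m := by
        rw [show exp 2 = exp 1 * exp 1 by rw [← exp_add]; norm_num]
        ring

/-- there is a universal constant `a > 0` such that if an `n`-dimensional
subspace of `C^k_∞` (matrices with the operator norm) is `K`-isomorphic to `ℓ¹ₙ`
(witnessed by a normalized embedding `Γ` with `‖Γ‖ ≤ 1` and `‖Γ⁻¹‖ ≤ K`), then
`n ≤ a K² log k`. -/
theorem ell1_embedding_into_matrices_dimension_bound :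
    ∃ a : ℝ, 0 < a ∧ ∀ (n k : ℕ) (K : ℝ), 1 ≤ K → 2 ≤ k →
      ∀ Γ : PiLp 1 (fun _ : Fin n => ℂ) →ₗ[ℂ] Matrix (Fin k) (Fin k) ℂ,
        (∀ c, matrixOpNorm (Γ c) ≤ ‖c‖) →
        (∀ c, ‖c‖ ≤ K * matrixOpNorm (Γ c)) →
        (n : ℝ) ≤ a * K ^ 2 * Real.log k := by
  refine ⟨12 * exp 2, by positivity, fun n k K hK hk Γ hup hlow => ?_⟩
  have hlogk : 1 / 2 < log k := by
    have := log_le_log two_pos (show (2 : ℝ) ≤ k by exact_mod_cast hk)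
    linarith [log_two_gt_d9]
  obtain ⟨s, hm_lo, hm_hi⟩ := exists_two_pow_succ_between (by linarith : 0 < log k)
  rcases n.eq_zero_or_pos with rfl | hn
  · simp only [CharP.cast_eq_zero]; positivity
  set A : Fin n → Matrix (Fin k) (Fin k) ℂ := fun i => Γ (PiLp.single 1 i 1)
  have hA (i : Fin n) : ‖A i‖ ≤ 1 := (hup _).trans_eq (by simp)
  set m := 2 ^ (s + 1)
  have hmoment : ((n : ℝ) / K) ^ (2 * m) ≤ k * (2 * exp 1 * m * n) ^ m := by
    refine le_of_mul_le_mul_left ?_ (by positivity : (0 : ℝ) < 2 ^ n)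
    calc 2 ^ n * ((n : ℝ) / K) ^ (2 * m) = ∑ _ε : Fin n → Bool, ((n : ℝ) / K) ^ (2 * m) := by simp
      _ ≤ ∑ ε : Fin n → Bool, ‖rademacherSum A ε‖ ^ (2 * m) := by
        gcongr with ε
        rw [div_le_iff₀' (by positivity)]
        simpa using card_le_mul_norm_rademacherSum Γ hlow ε
      _ ≤ k * ∑ ε : Fin n → Bool, (∑ i, boolSign (ε i)) ^ (2 * m) := by
        simpa using sum_norm_rademacherSum_pow_le A hA s
      _ ≤ k * (2 ^ n * (2 * exp 1 * m * n) ^ m) := by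
        gcongr
        simpa using sum_sum_boolSign_pow_le (ι := Fin n) (m := m) (by positivity) (by simpa)
      _ = 2 ^ n * (k * (2 * exp 1 * m * n) ^ m) := by ring
  calc (n : ℝ) ≤ 2 * exp 2 * m * K ^ 2 :=
        le_of_div_pow_le_mul_pow (by positivity) (by positivity) (by positivity) (by positivity)
          (by exact_mod_cast hm_lo) hmoment
    _ ≤ 2 * exp 2 * (6 * log k) * K ^ 2 := by gcongr; push_cast [m]; linarith
    _ = 12 * exp 2 * K ^ 2 * log k := by ring
end

section
/- Let A be a C*-algebra, Ω = {x_1,…,x_n} a subset of its unit ball, and suppose the linear map Γ : ℓ^n_1 → span Ω sending the i-th standard basis vector to x_i is an isomorphism with ‖Γ^{-1}‖ ≤ K for some K ≥ 1. If φ : A → B is a contractive completely positive map into a C*-algebra B, ψ : B → B(H) is contractive, π : A → B(H) is an isometric representation, and ‖(ψ∘φ)(x) − π(x)‖ < δ for all x ∈ Ω with 0 < δ < K^{-1}, then for all scalars c_1,…,c_n: ‖φ(Σ c_i x_i)‖ ≥ (1 − Kδ)‖Σ c_i x_i‖. In particular the restriction of φ to span Ω is a (1 − Kδ)^{-1}-isomorphism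 onto its image. -/
/-!
On `a = ∑ cᵢ xᵢ` the error `ψ (φ a) - π a` is at most `δ ∑ |cᵢ| ≤ Kδ ‖a‖`, by the `ℓ¹` bound.
Since `π` is isometric and `ψ` contractive, `‖a‖ = ‖π a‖ ≤ ‖ψ (φ a)‖ + Kδ‖a‖ ≤ ‖φ a‖ + Kδ‖a‖`.
-/

theorem norm_map_sum_smul_sub_le {𝕜 E F ι : Type*} [NormedField 𝕜] [AddCommGroup E]
    [Module 𝕜 E] [SeminormedAddCommGroup F] [NormedSpace 𝕜 F]
    (s : Finset ι) (f g : E →ₗ[𝕜] F) (x : ι → E) (c : ι → 𝕜) {δ : ℝ}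
    (h : ∀ i ∈ s, ‖f (x i) - g (x i)‖ ≤ δ) :
    ‖f (∑ i ∈ s, c i • x i) - g (∑ i ∈ s, c i • x i)‖ ≤ (∑ i ∈ s, ‖c i‖) * δ := by
  rw [← LinearMap.sub_apply, map_sum, Finset.sum_mul]
  refine norm_sum_le_of_le s fun i hi => ?_
  rw [map_smul, LinearMap.sub_apply, norm_smul]
  exact mul_le_mul_of_nonneg_left (h i hi) (norm_nonneg _)

theorem cpa_restriction_almost_isometric_general
    (A B : Type*) [CStarAlgebra A] [CStarAlgebra B]
    (H : Type*) [NormedAddCommGroup H] [InnerProductSpace ℂ H] [CompleteSpace H]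
    (n : ℕ) (x : Fin n → A)
    (K : ℝ)
    (hGinv : ∀ c : Fin n → ℂ, ∑ i : Fin n, ‖c i‖ ≤ K * ‖∑ i : Fin n, c i • x i‖)
    (φ : A →ₗ[ℂ] B) (hφ : ∀ a, ‖φ a‖ ≤ ‖a‖)
    (ψ : B →ₗ[ℂ] (H →L[ℂ] H)) (hψ : ∀ b, ‖ψ b‖ ≤ ‖b‖)
    (π : A →⋆ₐ[ℂ] (H →L[ℂ] H)) (hπ : ∀ a, ‖π a‖ = ‖a‖)
    (δ : ℝ) (hδ0 : 0 < δ)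
    (happ : ∀ i, ‖ψ (φ (x i)) - π (x i)‖ < δ) :
    ∀ c : Fin n → ℂ,
      (1 - K * δ) * ‖∑ i : Fin n, c i • x i‖ ≤ ‖φ (∑ i : Fin n, c i • x i)‖ ∧
      ‖φ (∑ i : Fin n, c i • x i)‖ ≤ ‖∑ i : Fin n, c i • x i‖ := by
  intro c
  set a := ∑ i : Fin n, c i • x i
  refine ⟨?_, hφ a⟩
  have happrox : ‖ψ (φ a) - π a‖ ≤ K * δ * ‖a‖ :=
    calc ‖ψ (φ a) - π a‖ ≤ (∑ i, ‖c i‖) * δ :=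
          norm_map_sum_smul_sub_le _ (ψ ∘ₗ φ) π.toLinearMap x c fun i _ => (happ i).le
      _ ≤ K * ‖a‖ * δ := by gcongr; exact hGinv c
      _ = K * δ * ‖a‖ := by ring
  calc (1 - K * δ) * ‖a‖ = ‖π a‖ - K * δ * ‖a‖ := by rw [hπ]; ring
    _ ≤ ‖ψ (φ a)‖ := by linarith [norm_sub_norm_le (π a) (ψ (φ a)), norm_sub_rev (π a) (ψ (φ a))]
    _ ≤ ‖φ a‖ := hψ _

/-- if `Ω = {x₁,…,xₙ}` lies in the unit ball of a C*-algebra and spans a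
copy of `ℓ¹ₙ` with inverse-norm bound `K`, and `(φ, ψ, B)` is a completely positive
approximation of a faithful representation `π` to within `δ < K⁻¹` on `Ω`, then
`‖φ(∑ cᵢ xᵢ)‖ ≥ (1 − Kδ)‖∑ cᵢ xᵢ‖`; together with contractivity of `φ`, its restriction
to `span Ω` is a `(1 − Kδ)⁻¹`-isomorphism onto its image. -/
theorem cpa_restriction_almost_isometric
    (A B : Type*) [CStarAlgebra A] [CStarAlgebra B]
    (H : Type*) [NormedAddCommGroup H] [InnerProductSpace ℂ H] [CompleteSpace H]
    (n : ℕ) (x : Fin n → A) (hx : ∀ i, ‖x i‖ ≤ 1)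
    (K : ℝ) (hK : 1 ≤ K)
    (hGinv : ∀ c : Fin n → ℂ, ∑ i : Fin n, ‖c i‖ ≤ K * ‖∑ i : Fin n, c i • x i‖)
    (φ : A →ₗ[ℂ] B) (hφ : ∀ a, ‖φ a‖ ≤ ‖a‖)
    (hφcp : ∀ (m : ℕ) (M : Matrix (Fin m) (Fin m) A), (∃ N, M = Matrix.conjTranspose N * N) →
      ∃ P : Matrix (Fin m) (Fin m) B, M.map φ = Matrix.conjTranspose P * P)
    (ψ : B →ₗ[ℂ] (H →L[ℂ] H)) (hψ : ∀ b, ‖ψ b‖ ≤ ‖b‖)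
    (π : A →⋆ₐ[ℂ] (H →L[ℂ] H)) (hπ : ∀ a, ‖π a‖ = ‖a‖)
    (δ : ℝ) (hδ0 : 0 < δ) (hδK : δ < K⁻¹)
    (happ : ∀ i, ‖ψ (φ (x i)) - π (x i)‖ < δ) :
    ∀ c : Fin n → ℂ,
      (1 - K * δ) * ‖∑ i : Fin n, c i • x i‖ ≤ ‖φ (∑ i : Fin n, c i • x i)‖ ∧
      ‖φ (∑ i : Fin n, c i • x i)‖ ≤ ‖∑ i : Fin n, c i • x i‖ :=
  cpa_restriction_almost_isometric_general A B H n x K hGinv φ hφ ψ hψ π hπ δ hδ0 happ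
end

section
/- Let T be a homeomorphism of a compact metric space X and let (x,y) be an entropy pair for T. Then for every continuous function f : X → ℂ with f(x) ≠ f(y), the pseudo-metric d_f(z,w) = |f(z) − f(w)| satisfies h_{d_f}(T) > 0. -/
/-- `E` is `(n,ε)`-separated for `T` with respect to the (pseudo-)metric `d`. -/
def IsSepOn {X : Type*} (d : X → X → ℝ) (T : X → X) (n : ℕ) (ε : ℝ) (E : Set X) : Prop :=
  ∀ x ∈ E, ∀ y ∈ E, x ≠ y → ∃ k < n, ε < d (T^[k] x) (T^[k] y)

/-- The maximal cardinality of an `(n,ε)`-separated subset of `S`. -/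
noncomputable def sepCount {X : Type*} (S : Set X) (d : X → X → ℝ) (T : X → X)
    (n : ℕ) (ε : ℝ) : ℕ :=
  sSup {m : ℕ | ∃ E : Finset X, ↑E ⊆ S ∧ IsSepOn d T n ε ↑E ∧ E.card = m}

/-- Topological entropy of `T` on `S` via `(n,ε)`-separated sets, with values in `EReal`. -/
noncomputable def sepEntropy {X : Type*} (S : Set X) (d : X → X → ℝ) (T : X → X) : EReal :=
  ⨆ ε : {e : ℝ // 0 < e},
    Filter.limsup (fun n : ℕ => ((Real.log (sepCount S d T n ε) / n : ℝ) : EReal)) Filter.atTop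

open Set Filter Metric

section Separated

variable {X : Type*} {d : X → X → ℝ} {T : X → X} {n : ℕ} {ε : ℝ}

theorem IsSepOn.insert {E : Set X} (hE : IsSepOn d T n ε E) (hd : ∀ z w, d z w = d w z)
    {z : X} (hz : ∀ e ∈ E, ∃ k < n, ε < d (T^[k] z) (T^[k] e)) :
    IsSepOn d T n ε (insert z E) := by
  rintro a (rfl | ha) b (rfl | hb) hab
  · exact absurd rfl hab
  · exact hz b hb
  · obtain ⟨k, hk, hlt⟩ := hz a ha
    exact ⟨k, hk, hd (T^[k] b) _ ▸ hlt⟩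
  · exact hE a ha b hb hab

theorem exists_spanning_card_eq_sepCount {S : Set X} (hd : ∀ z w, d z w = d w z)
    (hd₀ : ∀ z, d z z = 0) (hε : 0 ≤ ε)
    (hbdd : ∃ N : ℕ, ∀ E : Finset X, ↑E ⊆ S → IsSepOn d T n ε ↑E → E.card ≤ N) :
    ∃ E : Finset X, E.card = sepCount S d T n ε ∧
      ∀ z ∈ S, ∃ e ∈ E, ∀ k < n, d (T^[k] z) (T^[k] e) ≤ ε := by
  classical
  set cards := {m : ℕ | ∃ E : Finset X, ↑E ⊆ S ∧ IsSepOn d T n ε ↑E ∧ E.card = m}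
  have hcards : BddAbove cards := by
    obtain ⟨N, hN⟩ := hbdd
    exact ⟨N, by rintro m ⟨E, hES, hE, rfl⟩; exact hN E hES hE⟩
  have hempty : 0 ∈ cards := ⟨∅, by simp, by simp [IsSepOn], rfl⟩
  obtain ⟨E, hES, hE, hcard⟩ := Nat.sSup_mem ⟨0, hempty⟩ hcards
  refine ⟨E, hcard, fun z hz => ?_⟩
  by_contra! hfar
  have hzE : z ∉ E := fun hzE => by
    obtain ⟨k, -, hlt⟩ := hfar z hzE
    linarith [hd₀ (T^[k] z)]
  have hmore : (insert z E).card ∈ cards :=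
    ⟨insert z E, by simpa using insert_subset hz hES, by simpa using hE.insert hd hfar, rfl⟩
  have := le_csSup hcards hmore
  rw [Finset.card_insert_of_notMem hzE, hcard] at this
  omega

theorem coverN_le_card_of_spanning {S : Set X} {𝒰 : Set (Set X)}
    (hleb : ∀ w, ∃ W ∈ 𝒰, ∀ z, d z w ≤ ε → z ∈ W) {E : Finset X}
    (hspan : ∀ z ∈ S, ∃ e ∈ E, ∀ k < n, d (T^[k] z) (T^[k] e) ≤ ε) :
    coverN S T 𝒰 n ≤ E.card := by
  choose W hW𝒰 hW using hleb
  refine Nat.sInf_le ⟨fun j k => W (T^[k] (E.equivFin.symm j)), fun j k => hW𝒰 _, ?_⟩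
  intro z hz
  obtain ⟨e, he, hze⟩ := hspan z hz
  refine mem_iUnion.mpr ⟨E.equivFin ⟨e, he⟩, mem_iInter.mpr fun k => ?_⟩
  simpa using hW _ _ (hze k k.isLt)

theorem limsup_log_div_le_sepEntropy {S : Set X} {a : ℕ → ℕ} (hε : 0 < ε)
    (h : ∀ n, a n ≤ sepCount S d T n ε) :
    limsup (fun n : ℕ => ((Real.log (a n) / n : ℝ) : EReal)) atTop ≤ sepEntropy S d T := by
  have hlog : ∀ n, Real.log (a n) ≤ Real.log (sepCount S d T n ε) := fun n => by
    rcases Nat.eq_zero_or_pos (a n) with h0 | hpos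
    · simpa [h0] using Real.log_natCast_nonneg _
    · exact Real.log_le_log (by exact_mod_cast hpos) (by exact_mod_cast h n)
  calc limsup (fun n : ℕ => ((Real.log (a n) / n : ℝ) : EReal)) atTop
      ≤ limsup (fun n : ℕ => ((Real.log (sepCount S d T n ε) / n : ℝ) : EReal)) atTop :=
        limsup_le_limsup (Eventually.of_forall fun n =>
          EReal.coe_le_coe_iff.mpr (div_le_div_of_nonneg_right (hlog n) n.cast_nonneg))
    _ ≤ sepEntropy S d T :=
        le_iSup (fun e : {e : ℝ // 0 < e} => limsup
          (fun n : ℕ => ((Real.log (sepCount S d T n e) / n : ℝ) : EReal)) atTop) ⟨ε, hε⟩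

end Separated

section PullbackDist

variable {X Y : Type*} [TopologicalSpace X] [PseudoMetricSpace Y] {g : X → Y} {T : X → X}

theorem exists_card_le_of_isSepOn [CompactSpace X] (hg : Continuous g) (hT : Continuous T)
    (n : ℕ) {ε : ℝ} (hε : 0 < ε) :
    ∃ N : ℕ, ∀ E : Finset X, IsSepOn (fun z w => dist (g z) (g w)) T n ε ↑E → E.card ≤ N := by
  set G : X → Fin n → Y := fun z k => g (T^[k] z)
  have hG : Continuous G := continuous_pi fun k => hg.comp (hT.iterate _)
  obtain ⟨t, -, ht, hcover⟩ := finite_approx_of_totallyBounded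
    (isCompact_range hG).totallyBounded (ε / 2) (half_pos hε)
  choose c hct hc using fun z => mem_iUnion₂.mp (hcover (mem_range_self z))
  refine ⟨ht.toFinset.card, fun E hE =>
    Finset.card_le_card_of_injOn c (fun z _ => ht.mem_toFinset.mpr (hct z)) ?_⟩
  intro a ha b hb hab
  by_contra hne
  obtain ⟨k, hk, hlt⟩ := hE a ha b hb hne
  have hGab : dist (G a) (G b) < ε := by
    have hb' := mem_ball.mp (hc b)
    rw [← hab] at hb'
    linarith [dist_triangle_right (G a) (G b) (c a), mem_ball.mp (hc a)]
  linarith [dist_le_pi_dist (G a) (G b) ⟨k, hk⟩]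

theorem coverN_le_sepCount [CompactSpace X] (hg : Continuous g) (hT : Continuous T)
    {S : Set X} {𝒰 : Set (Set X)} {ε : ℝ} (hε : 0 < ε)
    (hleb : ∀ w, ∃ W ∈ 𝒰, ∀ z, dist (g z) (g w) ≤ ε → z ∈ W) (n : ℕ) :
    coverN S T 𝒰 n ≤ sepCount S (fun z w => dist (g z) (g w)) T n ε := by
  obtain ⟨N, hN⟩ := exists_card_le_of_isSepOn hg hT n hε
  obtain ⟨E, hcard, hspan⟩ := exists_spanning_card_eq_sepCount (fun _ _ => dist_comm _ _)
    (fun _ => dist_self _) hε.le ⟨N, fun E _ => hN E⟩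
  exact hcard ▸ coverN_le_card_of_spanning hleb hspan

theorem mem_interior_preimage_closedBall (hg : Continuous g) (x : X) {r : ℝ} (hr : 0 < r) :
    x ∈ interior (g ⁻¹' closedBall (g x) r) :=
  mem_interior.mpr ⟨g ⁻¹' ball (g x) r, preimage_mono ball_subset_closedBall,
    hg.isOpen_preimage _ isOpen_ball, mem_ball_self hr⟩

end PullbackDist

theorem disjoint_closedBall_or_disjoint_closedBall {Y : Type*} [PseudoMetricSpace Y]
    {a b : Y} {ρ σ : ℝ} (h : 2 * (ρ + σ) < dist a b) (p : Y) :
    Disjoint (closedBall p ρ) (closedBall a σ) ∨ Disjoint (closedBall p ρ) (closedBall b σ) := by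
  by_cases hpa : ρ + σ < dist p a
  · exact .inl (closedBall_disjoint_closedBall hpa)
  · refine .inr (closedBall_disjoint_closedBall ?_)
    linarith [dist_triangle_left a b p]

theorem sepEntropy_pos_of_entropy_pair {X Y : Type*} [TopologicalSpace X] [CompactSpace X]
    [PseudoMetricSpace Y] {T : X → X} (hT : Continuous T) {x y : X}
    (hpair : ∀ U V : Set X, IsOpen U → IsOpen V → U ∪ V = univ →
      x ∈ interior Uᶜ → y ∈ interior Vᶜ →
      0 < limsup (fun n : ℕ => ((Real.log (coverN univ T {U, V} n) / n : ℝ) : EReal)) atTop)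
    {g : X → Y} (hg : Continuous g) (hgxy : 0 < dist (g x) (g y)) :
    0 < sepEntropy univ (fun z w => dist (g z) (g w)) T := by
  set r := dist (g x) (g y)
  set U := g ⁻¹' (closedBall (g x) (r / 3))ᶜ
  set V := g ⁻¹' (closedBall (g y) (r / 3))ᶜ
  have hcover : U ∪ V = univ := by
    rw [← preimage_union, ← compl_inter,
      (closedBall_disjoint_closedBall (by linarith)).inter_eq, compl_empty, preimage_univ]
  have hleb : ∀ w, ∃ W ∈ ({U, V} : Set (Set X)), ∀ z, dist (g z) (g w) ≤ r / 7 → z ∈ W := by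
    intro w
    rcases disjoint_closedBall_or_disjoint_closedBall (a := g x) (b := g y) (ρ := r / 7) (σ := r / 3) (by linarith) (g w) with h | h
    exacts [⟨U, .inl rfl, fun z hz => h.subset_compl_right (mem_closedBall.mpr hz)⟩,
      ⟨V, .inr rfl, fun z hz => h.subset_compl_right (mem_closedBall.mpr hz)⟩]
  have hpos := hpair U V (hg.isOpen_preimage _ isClosed_closedBall.isOpen_compl)
    (hg.isOpen_preimage _ isClosed_closedBall.isOpen_compl) hcover
    (by simpa [U] using mem_interior_preimage_closedBall hg x (by positivity : 0 < r / 3))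
    (by simpa [V] using mem_interior_preimage_closedBall hg y (by positivity : 0 < r / 3))
  exact hpos.trans_le (limsup_log_div_le_sepEntropy (by positivity)
    (coverN_le_sepCount hg hT (by positivity) hleb))

theorem entropy_pair_positive_pseudometric_entropy_general
    {X : Type*} [MetricSpace X] [CompactSpace X]
    (T : X ≃ₜ X) (x y : X)
    (hpair : ∀ U V : Set X, IsOpen U → IsOpen V → U ∪ V = Set.univ →
      x ∈ interior Uᶜ → y ∈ interior Vᶜ →
      0 < Filter.limsup
        (fun n : ℕ => ((Real.log (coverN Set.univ (⇑T) {U, V} n) / n : ℝ) : EReal))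
        Filter.atTop)
    (f : X → ℂ) (hf : Continuous f) (hfxy : f x ≠ f y) :
    0 < sepEntropy Set.univ (fun z w => ‖f z - f w‖) (⇑T) := by
  simpa only [dist_eq_norm] using
    sepEntropy_pos_of_entropy_pair T.continuous hpair hf (dist_pos.mpr hfxy)

/-- if `(x,y)` is an entropy pair for a homeomorphism `T` of a compact
metric space, then for every continuous `f` with `f x ≠ f y`, the entropy of `T` with
respect to the pseudo-metric `d_f(z,w) = |f z − f w|` is positive. -/
theorem entropy_pair_positive_pseudometric_entropy
    {X : Type*} [MetricSpace X] [CompactSpace X]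
    (T : X ≃ₜ X) (x y : X) (hxy : x ≠ y)
    (hpair : ∀ U V : Set X, IsOpen U → IsOpen V → U ∪ V = Set.univ →
      x ∈ interior Uᶜ → y ∈ interior Vᶜ →
      0 < Filter.limsup
        (fun n : ℕ => ((Real.log (coverN Set.univ (⇑T) {U, V} n) / n : ℝ) : EReal))
        Filter.atTop)
    (f : X → ℂ) (hf : Continuous f) (hfxy : f x ≠ f y) :
    0 < sepEntropy Set.univ (fun z w => ‖f z - f w‖) (⇑T) :=
  entropy_pair_positive_pseudometric_entropy_general T x y hpair f hf hfxy
end
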